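/- arXiv:2305.12489 — 2 statements merged into one kernel-verified Lean document; each statement's English description precedes it below -/
import Mathlib

section
/- Let α, σ > 0 and set p = α/(α+σ). On a probability space let ξ_1, ξ_2, … be i.i.d. random variables with the exponential distribution of rate α, and for each n let K_n be an ℕ-valued random variable independent of the sequence (ξ_i) such that K_n/n → p in probability (i.e. for every ε > 0, P[|K_n/n − p| > ε] → 0 as n → ∞). Define the largest inactivity period ψ_n := max_{1 ≤ i ≤ K_n} ξ_i (with ψ_n := 0 if K_n = 0). Then for every t ∈ ℝ, lim_{n→∞} P[α(ψ_n − ln(np)/α) ≤ t] = exp(−e^{-t}), i.e. α(ψ_n − ln(np)/α) converges in distribution to a standard Gumbel random variable. -/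
open MeasureTheory ProbabilityTheory Filter

/-- The largest inactivity period: the maximum of the first `K n ω` of the dormancy periods
`ξ i ω`, taken to be `0` if `K n ω = 0`. -/
noncomputable def psi {Ω : Type*} (ξ : ℕ → Ω → ℝ) (K : ℕ → Ω → ℕ) (n : ℕ) (ω : Ω) : ℝ :=
  if h : (Finset.Icc 1 (K n ω)).Nonempty then (Finset.Icc 1 (K n ω)).sup' h fun i => ξ i ω
  else 0

/-!
Given `K n = k`, the maximum of `k` i.i.d. exponential(`α`) variables is at most `x` with
probability `(1 - e^{-αx})^k`, so by independence `P[ψ_n ≤ x] = E[(1 - e^{-αx})^{K n}]`.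
At the threshold `x = (t + ln(np))/α` the integrand is
`(1 - e^{-t}/(np))^{K n} = exp((K n / n) · n ln(1 - e^{-t}/(np)))`; since
`n ln(1 - e^{-t}/(np)) → -e^{-t}/p` and `K n / n → p` in probability, it converges in probability
to `exp(-e^{-t})`, and being bounded by `1`, so do its expectations.
-/

open scoped Topology

theorem tendsto_natCast_mul_log_one_sub_div (c p : ℝ) (hp : p ≠ 0) :
    Tendsto (fun n : ℕ ↦ n * Real.log (1 - c / (n * p))) atTop (𝓝 (-c / p)) := by
  have h := Real.tendsto_mul_log_one_add_of_tendsto (g := fun x ↦ -c / (x * p)) (t := -c / p) ?_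
  · simpa [Function.comp_def, sub_eq_add_neg, neg_div] using h.comp tendsto_natCast_atTop_atTop
  · refine tendsto_const_nhds.congr' ?_
    filter_upwards [eventually_ne_atTop 0] with x hx
    field_simp

theorem one_sub_div_mem_Ioc {c y : ℝ} (hc : 0 ≤ c) (hcy : c < y) : 1 - c / y ∈ Set.Ioc 0 1 := by
  have hy : 0 < y := hc.trans_lt hcy
  constructor
  · linarith [(div_lt_one hy).2 hcy]
  · linarith [div_nonneg hc hy.le]

theorem exp_neg_mul_div_add_log {a y : ℝ} (ha : a ≠ 0) (hy : 0 < y) (t : ℝ) :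
    Real.exp (-a * ((t + Real.log y) / a)) = Real.exp (-t) / y := by
  rw [show -a * ((t + Real.log y) / a) = -t - Real.log y by field_simp; ring,
    Real.exp_sub, Real.exp_log hy]

theorem setOf_mul_sub_div_le {Ω : Type*} {f : Ω → ℝ} {a : ℝ} (ha : 0 < a) (L t : ℝ) :
    {ω | a * (f ω - L / a) ≤ t} = {ω | f ω ≤ (t + L) / a} := by
  ext ω
  simp only [Set.mem_ofPred_eq, le_div_iff₀ ha, mul_sub, mul_div_cancel₀ _ ha.ne']
  constructor <;> intro h <;> linarith

namespace MeasureTheory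

variable {α ι E F : Type*} {m : MeasurableSpace α} {μ : Measure α}

theorem tendstoInMeasure_of_tendsto_measureReal_lt_dist [IsFiniteMeasure μ]
    [PseudoMetricSpace E] {l : Filter ι} {X : ι → α → E} {y : E}
    (h : ∀ ε : ℝ, 0 < ε → Tendsto (fun i ↦ μ.real {ω | ε < dist (X i ω) y}) l (𝓝 0)) :
    TendstoInMeasure μ X l fun _ ↦ y := by
  refine tendstoInMeasure_iff_measureReal_dist.2 fun ε hε ↦ ?_
  refine tendsto_of_tendsto_of_tendsto_of_le_of_le tendsto_const_nhds (h (ε / 2) (by positivity))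
    (fun _ ↦ measureReal_nonneg) fun i ↦ measureReal_mono fun ω hω ↦ ?_
  exact (half_lt_self hε).trans_le hω

theorem TendstoInMeasure.apply_of_tendsto_uncurry [PseudoMetricSpace E] [PseudoMetricSpace F]
    {l : Filter ι} {X : ι → α → E} {y : E} (hX : TendstoInMeasure μ X l fun _ ↦ y)
    {Φ : ι → E → F} {L : F} (hΦ : Tendsto (Function.uncurry Φ) (l ×ˢ 𝓝 y) (𝓝 L)) :
    TendstoInMeasure μ (fun i ω ↦ Φ i (X i ω)) l fun _ ↦ L := by
  rw [tendstoInMeasure_iff_dist] at hX ⊢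
  intro ε hε
  obtain ⟨good, hgood, near, hnear, hΦε⟩ :=
    eventually_prod_iff.1 (Metric.tendsto_nhds.1 hΦ ε hε)
  obtain ⟨δ, hδ, hball⟩ := Metric.eventually_nhds_iff.1 hnear
  refine tendsto_of_tendsto_of_tendsto_of_le_of_le' tendsto_const_nhds (hX δ hδ)
    (Eventually.of_forall fun _ ↦ zero_le) ?_
  filter_upwards [hgood] with i hi
  refine measure_mono fun ω hω ↦ ?_
  by_contra hfar
  exact (not_lt.2 hω) (hΦε hi (hball (not_le.1 hfar)))

theorem tendsto_integral_of_tendstoInMeasure_of_bound [IsFiniteMeasure μ] {f : ℕ → α → ℝ}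
    {g : α → ℝ} (hf : ∀ n, AEStronglyMeasurable (f n) μ) {C : ℝ}
    (hbound : ∀ᶠ n in atTop, ∀ᵐ ω ∂μ, ‖f n ω‖ ≤ C) (hfg : TendstoInMeasure μ f atTop g) :
    Tendsto (fun n ↦ ∫ ω, f n ω ∂μ) atTop (𝓝 (∫ ω, g ω ∂μ)) := by
  refine tendsto_of_subseq_tendsto fun ns hns ↦ ?_
  obtain ⟨ms, hms, hae⟩ := (hfg.comp hns).exists_seq_tendsto_ae
  exact ⟨ms, tendsto_integral_filter_of_dominated_convergence (fun _ ↦ C)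
    (Eventually.of_forall fun n ↦ hf _) ((hns.comp hms.tendsto_atTop).eventually hbound)
    (integrable_const C) hae⟩

theorem tendsto_integral_pow_of_tendstoInMeasure_div [IsProbabilityMeasure μ] {N : ℕ → α → ℕ}
    (hN : ∀ n, Measurable (N n)) {s : ℝ}
    (hNs : TendstoInMeasure μ (fun n ω ↦ (N n ω : ℝ) / n) atTop fun _ ↦ s) {Q : ℕ → ℝ}
    (hQ : ∀ᶠ n in atTop, Q n ∈ Set.Ioc 0 1) {r : ℝ}
    (hr : Tendsto (fun n : ℕ ↦ n * Real.log (Q n)) atTop (𝓝 r)) :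
    Tendsto (fun n ↦ ∫ ω, Q n ^ N n ω ∂μ) atTop (𝓝 (Real.exp (s * r))) := by
  have hΦ : Tendsto (Function.uncurry fun n y ↦ Real.exp (y * (n * Real.log (Q n))))
      (atTop ×ˢ 𝓝 s) (𝓝 (Real.exp (s * r))) :=
    (tendsto_snd.mul (hr.comp tendsto_fst)).rexp
  have hconv : TendstoInMeasure μ (fun n ω ↦ Q n ^ N n ω) atTop fun _ ↦ Real.exp (s * r) := by
    refine (hNs.apply_of_tendsto_uncurry hΦ).congr' ?_ EventuallyEq.rfl
    filter_upwards [hQ, eventually_ne_atTop 0] with n hQn hn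
    refine Eventually.of_forall fun ω ↦ ?_
    have hn' : (n : ℝ) ≠ 0 := Nat.cast_ne_zero.2 hn
    dsimp only
    rw [show (N n ω : ℝ) / n * (n * Real.log (Q n)) = N n ω * Real.log (Q n) by field_simp,
      ← Real.log_pow, Real.exp_log (pow_pos hQn.1 _)]
  have hbound : ∀ᶠ n in atTop, ∀ᵐ ω ∂μ, ‖Q n ^ N n ω‖ ≤ 1 := by
    filter_upwards [hQ] with n hQn
    refine Eventually.of_forall fun ω ↦ ?_
    rw [norm_pow, Real.norm_of_nonneg hQn.1.le]
    exact pow_le_one₀ hQn.1.le hQn.2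
  simpa using tendsto_integral_of_tendstoInMeasure_of_bound
    (fun n ↦ (measurable_from_nat.comp (hN n)).aestronglyMeasurable) hbound hconv

end MeasureTheory

namespace ProbabilityTheory

variable {Ω β γ ι : Type*} {mΩ : MeasurableSpace Ω} {μ : Measure Ω}

theorem IndepFun.measure_prodMk_preimage_eq_lintegral [IsFiniteMeasure μ]
    [MeasurableSpace β] [MeasurableSpace γ] {X : Ω → β} {Y : Ω → γ} (hXY : IndepFun X Y μ)
    (hX : Measurable X) (hY : Measurable Y) {S : Set (β × γ)} (hS : MeasurableSet S) :
    μ ((fun ω ↦ (X ω, Y ω)) ⁻¹' S) = ∫⁻ ω, μ (Y ⁻¹' (Prod.mk (X ω) ⁻¹' S)) ∂μ := by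
  rw [← Measure.map_apply (hX.prodMk hY) hS,
    hXY.map_prod_eq_prod_map_map hX.aemeasurable hY.aemeasurable, Measure.prod_apply hS,
    lintegral_map (measurable_measure_prodMk_left hS) hX]
  simp_rw [Measure.map_apply hY (measurable_prodMk_left hS)]

theorem iIndepFun.measure_forall_mem_eq_pow [MeasurableSpace β] {ξ : ι → Ω → β}
    (hξ : iIndepFun ξ μ) {A : Set β} (hA : MeasurableSet A) {q : ENNReal}
    (hq : ∀ i, μ (ξ i ⁻¹' A) = q) (s : Finset ι) :
    μ {ω | ∀ i ∈ s, ξ i ω ∈ A} = q ^ s.card := by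
  rw [← Finset.prod_const, ← Finset.prod_congr rfl fun i _ ↦ hq i,
    ← hξ.measure_inter_preimage_eq_mul s fun _ _ ↦ hA]
  congr 1
  ext ω
  simp

end ProbabilityTheory

section LargestInactivity

variable {Ω : Type*} {ξ : ℕ → Ω → ℝ} {K : ℕ → Ω → ℕ} {n : ℕ} {x : ℝ}

theorem psi_le_iff {ω : Ω} (hx : 0 ≤ x) :
    psi ξ K n ω ≤ x ↔ ∀ i ∈ Finset.Icc 1 (K n ω), ξ i ω ≤ x := by
  unfold psi
  split_ifs with hne
  · exact Finset.sup'_le_iff hne _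
  · simp [Finset.not_nonempty_iff_eq_empty.1 hne, hx]

variable [MeasurableSpace Ω] {P : Measure Ω} [IsFiniteMeasure P]

theorem measure_psi_le {q : ENNReal} (hx : 0 ≤ x) (hξmeas : ∀ i, Measurable (ξ i))
    (hKmeas : Measurable (K n)) (hq : ∀ i, P (ξ i ⁻¹' Set.Iic x) = q) (hξindep : iIndepFun ξ P)
    (hKindep : IndepFun (K n) (fun ω i ↦ ξ i ω) P) :
    P {ω | psi ξ K n ω ≤ x} = ∫⁻ ω, q ^ K n ω ∂P := by
  set S : Set (ℕ × (ℕ → ℝ)) := {z | ∀ i ∈ Finset.Icc 1 z.1, z.2 i ≤ x}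
  have hS : MeasurableSet S := by
    refine measurableSet_setOfPred.2 (measurable_from_prod_countable_right fun k ↦ ?_)
    refine measurableSet_setOfPred.1 ?_
    simp only [Set.ofPred_forall]
    exact .biInter (Finset.Icc 1 k).countable_toSet
      fun i _ ↦ measurableSet_le (measurable_pi_apply i) measurable_const
  have hpsi : {ω | psi ξ K n ω ≤ x} = (fun ω ↦ (K n ω, fun i ↦ ξ i ω)) ⁻¹' S := by
    ext ω
    simp [S, psi_le_iff hx]
  rw [hpsi, hKindep.measure_prodMk_preimage_eq_lintegral hKmeas (measurable_pi_lambda _ hξmeas) hS]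
  congr with ω
  simpa [S, Set.preimage] using
    hξindep.measure_forall_mem_eq_pow measurableSet_Iic hq (Finset.Icc 1 (K n ω))

theorem measureReal_psi_le {q : ℝ} (hq0 : 0 ≤ q) (hx : 0 ≤ x) (hξmeas : ∀ i, Measurable (ξ i))
    (hKmeas : Measurable (K n)) (hq : ∀ i, P (ξ i ⁻¹' Set.Iic x) = ENNReal.ofReal q)
    (hξindep : iIndepFun ξ P) (hKindep : IndepFun (K n) (fun ω i ↦ ξ i ω) P) :
    P.real {ω | psi ξ K n ω ≤ x} = ∫ ω, q ^ K n ω ∂P := by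
  rw [measureReal_def, measure_psi_le hx hξmeas hKmeas hq hξindep hKindep,
    integral_eq_lintegral_of_nonneg_ae (Eventually.of_forall fun _ ↦ by positivity)
      (show Measurable fun ω ↦ q ^ K n ω from measurable_from_nat.comp hKmeas).aestronglyMeasurable]
  simp_rw [ENNReal.ofReal_pow hq0]

end LargestInactivity

/-- Gumbel limit of the largest inactivity period: if `ξ i` are i.i.d. exponential(`α`),
`K n` is independent of the sequence `(ξ i)` with `K n / n → p = α/(α+σ)` in probability,
and `ψ_n = max_{1 ≤ i ≤ K n} ξ i`, then `α(ψ_n - ln(np)/α)` converges in distribution to a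
standard Gumbel random variable. -/
theorem largest_inactivity_gumbel
    {Ω : Type*} [MeasurableSpace Ω] (P : Measure Ω) [IsProbabilityMeasure P]
    (α σ : ℝ) (hα : 0 < α) (hσ : 0 < σ) (p : ℝ) (hp : p = α / (α + σ))
    (ξ : ℕ → Ω → ℝ) (K : ℕ → Ω → ℕ)
    (hξmeas : ∀ i, Measurable (ξ i)) (hKmeas : ∀ n, Measurable (K n))
    (hξdist : ∀ i, ∀ x : ℝ, 0 ≤ x →
      P {ω | ξ i ω ≤ x} = ENNReal.ofReal (1 - Real.exp (-α * x)))
    (hξindep : iIndepFun ξ P)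
    (hKindep : ∀ n, IndepFun (K n) (fun ω (i : ℕ) => ξ i ω) P)
    (hKp : ∀ ε : ℝ, 0 < ε →
      Tendsto (fun n : ℕ => (P {ω | ε < |(K n ω : ℝ) / (n : ℝ) - p|}).toReal)
        atTop (nhds 0)) :
    ∀ t : ℝ,
      Tendsto (fun n : ℕ =>
          (P {ω | α * (psi ξ K n ω - Real.log ((n : ℝ) * p) / α) ≤ t}).toReal)
        atTop (nhds (Real.exp (-Real.exp (-t)))) := by
  intro t
  have hp0 : 0 < p := hp ▸ div_pos hα (by linarith)
  have hK : TendstoInMeasure P (fun n ω ↦ (K n ω : ℝ) / n) atTop fun _ ↦ p :=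
    tendstoInMeasure_of_tendsto_measureReal_lt_dist <| by
      simpa [Real.dist_eq, measureReal_def] using hKp
  have hnp : Tendsto (fun n : ℕ ↦ (n : ℝ) * p) atTop atTop :=
    tendsto_natCast_atTop_atTop.atTop_mul_const hp0
  have hQ : ∀ᶠ n : ℕ in atTop, 1 - Real.exp (-t) / (n * p) ∈ Set.Ioc 0 1 :=
    (hnp.eventually_gt_atTop _).mono fun _ ↦ one_sub_div_mem_Ioc (Real.exp_pos _).le
  have hlim := tendsto_integral_pow_of_tendstoInMeasure_div hKmeas hK hQ
    (tendsto_natCast_mul_log_one_sub_div _ p hp0.ne')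
  rw [mul_div_cancel₀ _ hp0.ne'] at hlim
  refine hlim.congr' ?_
  filter_upwards [hQ, (Real.tendsto_log_atTop.comp hnp).eventually_ge_atTop (-t),
    hnp.eventually_gt_atTop 0] with n hQn hlog hnp0
  have hx : 0 ≤ (t + Real.log (n * p)) / α :=
    div_nonneg (by linarith [show -t ≤ Real.log (n * p) from hlog]) hα.le
  have hcdf (i : ℕ) : P (ξ i ⁻¹' Set.Iic ((t + Real.log (n * p)) / α))
      = ENNReal.ofReal (1 - Real.exp (-t) / (n * p)) := by
    rw [← exp_neg_mul_div_add_log hα.ne' hnp0]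
    exact hξdist i _ hx
  rw [← measureReal_def, setOf_mul_sub_div_le hα,
    measureReal_psi_le hQn.1.le hx hξmeas (hKmeas n) hcdf hξindep (hKindep n)]
end

section
/- Let α, σ > 0 and set p = α/(α+σ). On a probability space let ξ_1, ξ_2, … be i.i.d. random variables with the exponential distribution of rate α, and for each n let K_n be an ℕ-valued random variable independent of the sequence (ξ_i) such that K_n/n → p in probability. Define ψ_n := max_{1 ≤ i ≤ K_n} ξ_i (with ψ_n := 0 if K_n = 0). Then for every r with 0 < r < 1/α, lim_{n→∞} P[ψ_n ≤ r·ln(np)] = 0. -/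
open MeasureTheory ProbabilityTheory Filter

/-!
Once `K_n ≥ m_n := ⌈np/2⌉`, the event `ψ_n ≤ x_n` with `x_n = r ln(np)` forces the first `m_n`
dormancy lengths to be at most `x_n`, which by independence has probability
`(1 - e^{-α x_n})^{m_n} ≤ exp(-e^{-α x_n} m_n)`. Since `e^{-α x_n} m_n ≈ (np)^{1 - α r} / 2 → ∞`,
this vanishes, while `P[K_n < m_n] ≤ P[|K_n/n - p| > p/2] → 0`.
-/

section LargestInactivity

variable {Ω : Type*} {ξ : ℕ → Ω → ℝ} {K : ℕ → Ω → ℕ} {n : ℕ} {ω : Ω}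

lemma le_psi {i : ℕ} (hi : i ∈ Finset.Icc 1 (K n ω)) : ξ i ω ≤ psi ξ K n ω := by
  rw [psi, dif_pos ⟨i, hi⟩]
  exact Finset.le_sup' (fun j => ξ j ω) hi

lemma setOf_psi_le_subset (m : ℕ) (x : ℝ) :
    {ω | psi ξ K n ω ≤ x} ⊆ {ω | K n ω < m} ∪ ⋂ i ∈ Finset.Icc 1 m, {ω | ξ i ω ≤ x} := by
  intro ω hω
  by_cases hK : K n ω < m
  · exact Or.inl hK
  · refine Or.inr (Set.mem_iInter₂.mpr fun i hi => ?_)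
    have hiK : i ∈ Finset.Icc 1 (K n ω) := by
      rw [Finset.mem_Icc] at hi ⊢
      omega
    exact (le_psi hiK).trans hω

variable [MeasurableSpace Ω] {P : Measure Ω}

lemma measure_psi_le_le_add_pow (hξindep : iIndepFun ξ P) {x : ℝ} {c : ENNReal}
    (hc : ∀ i, P {ω | ξ i ω ≤ x} = c) (m : ℕ) :
    P {ω | psi ξ K n ω ≤ x} ≤ P {ω | K n ω < m} + c ^ m := by
  have hmax : P (⋂ i ∈ Finset.Icc 1 m, {ω | ξ i ω ≤ x}) = c ^ m := by
    rw [hξindep.meas_biInter (s := fun i => {ω | ξ i ω ≤ x})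
      fun i _ => ⟨Set.Iic x, measurableSet_Iic, rfl⟩]
    simp [hc]
  calc P {ω | psi ξ K n ω ≤ x}
      ≤ P ({ω | K n ω < m} ∪ ⋂ i ∈ Finset.Icc 1 m, {ω | ξ i ω ≤ x}) :=
        measure_mono (setOf_psi_le_subset m x)
    _ ≤ P {ω | K n ω < m} + c ^ m := hmax ▸ measure_union_le _ _

lemma toReal_measure_psi_le_le_of_exponential [IsFiniteMeasure P] (hξindep : iIndepFun ξ P)
    {α x : ℝ} (hαx : 0 ≤ α * x)
    (hξdist : ∀ i, P {ω | ξ i ω ≤ x} = ENNReal.ofReal (1 - Real.exp (-α * x))) (m : ℕ) :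
    (P {ω | psi ξ K n ω ≤ x}).toReal
      ≤ (P {ω | K n ω < m}).toReal + Real.exp (-(Real.exp (-α * x) * m)) := by
  set q := Real.exp (-α * x)
  have hq : 0 ≤ 1 - q := by
    simp only [q, sub_nonneg, Real.exp_le_one_iff, neg_mul, neg_nonpos]
    exact hαx
  have hpow : (1 - q) ^ m ≤ Real.exp (-(q * m)) :=
    calc (1 - q) ^ m ≤ Real.exp (-q) ^ m := pow_le_pow_left₀ hq (Real.one_sub_le_exp_neg q) m
      _ = Real.exp (-(q * m)) := by rw [← Real.exp_nat_mul]; ring_nf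
  calc (P {ω | psi ξ K n ω ≤ x}).toReal
      ≤ (P {ω | K n ω < m} + ENNReal.ofReal (1 - q) ^ m).toReal :=
        ENNReal.toReal_mono (by finiteness) (measure_psi_le_le_add_pow hξindep hξdist m)
    _ = (P {ω | K n ω < m}).toReal + (1 - q) ^ m := by
        rw [ENNReal.toReal_add (measure_ne_top _ _) (by finiteness), ENNReal.toReal_pow,
          ENNReal.toReal_ofReal hq]
    _ ≤ _ := by gcongr

end LargestInactivity

lemma lt_abs_div_sub_of_lt_ceil {k n : ℕ} {p : ℝ} (hk : k < ⌈n * p / 2⌉₊) :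
    p / 2 < |(k : ℝ) / n - p| := by
  have hn : (0 : ℝ) < n := by
    rcases Nat.eq_zero_or_pos n with rfl | hn
    · simp at hk
    · exact_mod_cast hn
  have hkn : (k : ℝ) / n < p / 2 := by
    rw [div_lt_iff₀ hn]
    linarith [Nat.lt_ceil.mp hk]
  rw [abs_sub_comm]
  exact lt_of_lt_of_le (by linarith) (le_abs_self _)

lemma tendsto_exp_neg_mul_log_mul_ceil_half_atTop {β : ℝ} (hβ : β < 1) :
    Tendsto (fun t : ℝ => Real.exp (-β * Real.log t) * ⌈t / 2⌉₊) atTop atTop := by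
  have hpow : Tendsto (fun t : ℝ => t ^ (1 - β) / 2) atTop atTop :=
    (tendsto_rpow_atTop (by linarith)).atTop_div_const (by norm_num)
  refine tendsto_atTop_mono' atTop ?_ hpow
  filter_upwards [eventually_gt_atTop 0] with t ht
  calc t ^ (1 - β) / 2 = t ^ (-β) * t / 2 := by rw [← Real.rpow_add_one ht.ne']; ring_nf
    _ = Real.exp (-β * Real.log t) * (t / 2) := by rw [Real.rpow_def_of_pos ht]; ring_nf
    _ ≤ Real.exp (-β * Real.log t) * ⌈t / 2⌉₊ := by gcongr; exact Nat.le_ceil _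

theorem largest_inactivity_subcritical_general
    {Ω : Type*} [MeasurableSpace Ω] (P : Measure Ω) [IsProbabilityMeasure P]
    (α σ : ℝ) (hα : 0 < α) (hσ : 0 < σ) (p : ℝ) (hp : p = α / (α + σ))
    (ξ : ℕ → Ω → ℝ) (K : ℕ → Ω → ℕ)
    (hξdist : ∀ i, ∀ x : ℝ, 0 ≤ x →
      P {ω | ξ i ω ≤ x} = ENNReal.ofReal (1 - Real.exp (-α * x)))
    (hξindep : iIndepFun ξ P)
    (hKp : ∀ ε : ℝ, 0 < ε →
      Tendsto (fun n : ℕ => (P {ω | ε < |(K n ω : ℝ) / (n : ℝ) - p|}).toReal)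
        atTop (nhds 0)) :
    ∀ r : ℝ, 0 < r → r < 1 / α →
      Tendsto (fun n : ℕ =>
          (P {ω | psi ξ K n ω ≤ r * Real.log ((n : ℝ) * p)}).toReal)
        atTop (nhds 0) := by
  intro r hr hrα
  have hp0 : 0 < p := by rw [hp]; positivity
  have hαr : α * r < 1 := by rwa [lt_div_iff₀ hα, mul_comm] at hrα
  have hnp : Tendsto (fun n : ℕ => (n : ℝ) * p) atTop atTop :=
    tendsto_natCast_atTop_atTop.atTop_mul_const hp0
  have hexp : Tendsto (fun n : ℕ => Real.exp (-(Real.exp (-α * (r * Real.log (n * p)))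
      * ⌈n * p / 2⌉₊))) atTop (nhds 0) := by
    refine Real.tendsto_exp_atBot.comp (tendsto_neg_atTop_atBot.comp ?_)
    refine ((tendsto_exp_neg_mul_log_mul_ceil_half_atTop hαr).comp hnp).congr fun n => ?_
    simp only [Function.comp_apply, neg_mul, mul_assoc]
  refine squeeze_zero' (Eventually.of_forall fun n => ENNReal.toReal_nonneg) ?_
    (by simpa only [add_zero] using (hKp (p / 2) (by positivity)).add hexp)
  filter_upwards [hnp.eventually_ge_atTop 1] with n hn
  have hx : 0 ≤ α * (r * Real.log (n * p)) := by have := Real.log_nonneg hn; positivity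
  refine (toReal_measure_psi_le_le_of_exponential hξindep hx
    (fun i => hξdist i _ (nonneg_of_mul_nonneg_right hx hα)) ⌈n * p / 2⌉₊).trans ?_
  gcongr ?_ + _
  exact ENNReal.toReal_mono (measure_ne_top _ _)
    (measure_mono fun ω => lt_abs_div_sub_of_lt_ceil)

/-- Sub-critical estimate for the largest inactivity period: for `0 < r < 1/α`,
`P[ψ_n ≤ r ln(np)] → 0`. -/
theorem largest_inactivity_subcritical
    {Ω : Type*} [MeasurableSpace Ω] (P : Measure Ω) [IsProbabilityMeasure P]
    (α σ : ℝ) (hα : 0 < α) (hσ : 0 < σ) (p : ℝ) (hp : p = α / (α + σ))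
    (ξ : ℕ → Ω → ℝ) (K : ℕ → Ω → ℕ)
    (hξmeas : ∀ i, Measurable (ξ i)) (hKmeas : ∀ n, Measurable (K n))
    (hξdist : ∀ i, ∀ x : ℝ, 0 ≤ x →
      P {ω | ξ i ω ≤ x} = ENNReal.ofReal (1 - Real.exp (-α * x)))
    (hξindep : iIndepFun ξ P)
    (hKindep : ∀ n, IndepFun (K n) (fun ω (i : ℕ) => ξ i ω) P)
    (hKp : ∀ ε : ℝ, 0 < ε →
      Tendsto (fun n : ℕ => (P {ω | ε < |(K n ω : ℝ) / (n : ℝ) - p|}).toReal)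
        atTop (nhds 0)) :
    ∀ r : ℝ, 0 < r → r < 1 / α →
      Tendsto (fun n : ℕ =>
          (P {ω | psi ξ K n ω ≤ r * Real.log ((n : ℝ) * p)}).toReal)
        atTop (nhds 0) :=
  largest_inactivity_subcritical_general P α σ hα hσ p hp ξ K hξdist hξindep hKp
end
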